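/- arXiv:1804.00534 — 4 statements merged into one kernel-verified Lean document; each statement's English description precedes it below -/
import Mathlib

section
/- Let (N_k) be a sequence of positive real numbers satisfying N_{k+1} ≤ d₀ e₀^k N_k^{1+ε} for all k, where d₀, ε > 0 and e₀ > 1. If N₀ ≤ d₀^{-1/ε} e₀^{-1/ε²}, then N_k ≤ e₀^{-k/ε} N₀ for all k, and consequently N_k → 0 as k → ∞. -/
open Filter Topology

theorem stmt0 (N : ℕ → ℝ) (d₀ e₀ ε : ℝ) (hd₀ : 0 < d₀) (hε : 0 < ε) (he₀ : 1 < e₀)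
    (hpos : ∀ k, 0 < N k)
    (hrec : ∀ k : ℕ, N (k + 1) ≤ d₀ * e₀ ^ (k : ℝ) * (N k) ^ (1 + ε))
    (h0 : N 0 ≤ d₀ ^ (-1 / ε) * e₀ ^ (-1 / ε ^ 2)) :
    (∀ k : ℕ, N k ≤ e₀ ^ (-(k : ℝ) / ε) * N 0) ∧ Tendsto N atTop (𝓝 0) := by
  have he0' : (0:ℝ) < e₀ := lt_trans one_pos he₀
  have hN0 : 0 < N 0 := hpos 0
  have hε' : ε ≠ 0 := ne_of_gt hε
  -- key bound on d₀ * (N 0)^ε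
  have h2 : d₀ * N 0 ^ ε ≤ e₀ ^ (-1/ε) := by
    have := Real.rpow_le_rpow hN0.le h0 hε.le
    rw [Real.mul_rpow (by positivity) (by positivity),
      ← Real.rpow_mul hd₀.le, ← Real.rpow_mul he0'.le] at this
    have e1 : -1/ε * ε = -1 := by field_simp
    have e2 : -1/ε^2 * ε = -1/ε := by field_simp
    rw [e1, e2, Real.rpow_neg_one] at this
    calc d₀ * N 0 ^ ε ≤ d₀ * (d₀⁻¹ * e₀ ^ (-1/ε)) :=
          mul_le_mul_of_nonneg_left this hd₀.le
      _ = e₀ ^ (-1/ε) := by field_simp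
  have hkey : ∀ k : ℕ, N k ≤ e₀ ^ (-(k : ℝ) / ε) * N 0 := by
    intro k
    induction k with
    | zero => simp
    | succ k ih =>
      have h1 : N (k+1) ≤ d₀ * e₀ ^ (k:ℝ) * (e₀ ^ (-(k:ℝ)/ε) * N 0) ^ (1+ε) := by
        refine (hrec k).trans ?_
        exact mul_le_mul_of_nonneg_left
          (Real.rpow_le_rpow (hpos k).le ih (by linarith)) (by positivity)
      have h3 : (e₀ ^ (-(k:ℝ)/ε) * N 0) ^ (1+ε)
          = e₀ ^ (-(k:ℝ)/ε * (1+ε)) * (N 0 ^ ε * N 0) := by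
        rw [Real.mul_rpow (by positivity) hN0.le, ← Real.rpow_mul he0'.le]
        rw [Real.rpow_add hN0, Real.rpow_one]
        ring
      rw [h3] at h1
      have hexp : e₀ ^ ((k:ℝ)) * e₀ ^ (-(k:ℝ)/ε * (1+ε)) = e₀ ^ (-(k:ℝ)/ε) := by
        rw [← Real.rpow_add he0']
        congr 1; field_simp; ring
      have h4 : d₀ * e₀ ^ (k:ℝ) * (e₀ ^ (-(k:ℝ)/ε * (1+ε)) * (N 0 ^ ε * N 0))
          = (d₀ * N 0 ^ ε) * (e₀ ^ (-(k:ℝ)/ε) * N 0) := by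
        rw [← hexp]; ring
      rw [h4] at h1
      have hsum : -1/ε + -(k:ℝ)/ε = -(((k:ℕ)+1:ℕ):ℝ)/ε := by push_cast; ring
      calc N (k+1) ≤ (d₀ * N 0 ^ ε) * (e₀ ^ (-(k:ℝ)/ε) * N 0) := h1
        _ ≤ e₀ ^ (-1/ε) * (e₀ ^ (-(k:ℝ)/ε) * N 0) :=
            mul_le_mul_of_nonneg_right h2 (by positivity)
        _ = e₀ ^ (-(((k:ℕ)+1:ℕ):ℝ)/ε) * N 0 := by
            rw [← mul_assoc, ← Real.rpow_add he0', hsum]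
  refine ⟨hkey, ?_⟩
  have hlim : Tendsto (fun k : ℕ => e₀ ^ (-(k:ℝ)/ε) * N 0) atTop (𝓝 0) := by
    have hr : e₀ ^ (-1/ε) < 1 :=
      Real.rpow_lt_one_of_one_lt_of_neg he₀ (div_neg_of_neg_of_pos (by norm_num) hε)
    have hform : ∀ k : ℕ, e₀ ^ (-(k:ℝ)/ε) = (e₀ ^ (-1/ε)) ^ k := by
      intro k
      rw [← Real.rpow_natCast (e₀ ^ (-1/ε)) k, ← Real.rpow_mul he0'.le]
      congr 1; ring
    simp only [hform]
    have := tendsto_pow_atTop_nhds_zero_of_lt_one (by positivity) hr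
    simpa using this.mul_const (N 0)
  refine squeeze_zero (fun k => (hpos k).le) hkey hlim
end

section
/- For every d > 0 and every ε ≥ (2e^{-1/2} − 1)d, the function r_{d,ε}(t) = ln⁺(d/t) · ((d−t)₊ + ε)^{-2} is monotone decreasing on (0, ∞). -/
/-!
On `(0, d]` the function is `log (d / t) / (d - t + ε) ^ 2`, whose derivative has the sign of
`2 t log (d / t) - (d - t + ε)`. The tangent line of `log` at `√e` gives
`log x ≤ x / √e - 1 / 2`, hence `2 t log (d / t) ≤ 2 e^{-1/2} d - t ≤ d - t + ε`.
On `[d, ∞)` the function vanishes, and the two pieces agree at `d`.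
-/

open Real Set

lemma two_mul_mul_log_div_le {d t : ℝ} (hd : 0 < d) (ht : 0 < t) :
    2 * t * log (d / t) ≤ 2 * exp (-1 / 2) * d - t := by
  have h := log_le_sub_one_of_pos (mul_pos (div_pos hd ht) (exp_pos (-1 / 2)))
  rw [log_mul (div_pos hd ht).ne' (exp_ne_zero _), log_exp] at h
  have hdt : 2 * t * (d / t * exp (-1 / 2)) = 2 * exp (-1 / 2) * d := by
    field_simp
  nlinarith

lemma hasDerivAt_log_div_div_sq {d ε t : ℝ} (hd : d ≠ 0) (ht : t ≠ 0)
    (h : d - t + ε ≠ 0) :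
    HasDerivAt (fun t => log (d / t) / (d - t + ε) ^ 2)
      ((2 * t * log (d / t) - (d - t + ε)) / (t * (d - t + ε) ^ 3)) t := by
  have hlog : HasDerivAt (fun t => log (d / t)) (-t⁻¹) t := by
    have := ((hasDerivAt_inv ht).const_mul d).log
      (by simpa [div_eq_mul_inv] using div_ne_zero hd ht)
    simp only [← div_eq_mul_inv] at this
    convert this using 1
    field_simp
  have hsq : HasDerivAt (fun t => (d - t + ε) ^ 2) (2 * (d - t + ε) * (-1)) t := by
    simpa using (((hasDerivAt_id t).const_sub d).add_const ε).fun_pow 2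
  refine (hlog.fun_div hsq (pow_ne_zero 2 h)).congr_deriv ?_
  field_simp
  ring

lemma antitoneOn_log_div_div_sq {d ε : ℝ} (hd : 0 < d)
    (hε : (2 * exp (-1 / 2) - 1) * d ≤ ε) :
    AntitoneOn (fun t => log (d / t) / (d - t + ε) ^ 2) (Ioc 0 d) := by
  have hε0 : 0 < ε :=
    (mul_pos (by linarith [add_one_lt_exp (x := -1 / 2) (by norm_num)]) hd).trans_le hε
  have hderiv : ∀ t ∈ Ioc 0 d, HasDerivAt (fun t => log (d / t) / (d - t + ε) ^ 2)
      ((2 * t * log (d / t) - (d - t + ε)) / (t * (d - t + ε) ^ 3)) t := fun t ht =>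
    hasDerivAt_log_div_div_sq hd.ne' ht.1.ne' (by linarith [ht.2])
  refine antitoneOn_of_hasDerivWithinAt_nonpos (convex_Ioc 0 d)
    (f' := fun t => (2 * t * log (d / t) - (d - t + ε)) / (t * (d - t + ε) ^ 3))
    (fun t ht => (hderiv t ht).continuousAt.continuousWithinAt) (fun t ht => ?_) (fun t ht => ?_)
    <;> rw [interior_Ioc] at ht
  · exact (hderiv t (Ioo_subset_Ioc_self ht)).hasDerivWithinAt
  · have hpos : 0 < d - t + ε := by linarith [ht.2]
    refine div_nonpos_of_nonpos_of_nonneg ?_ (by have := ht.1; positivity)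
    linarith [two_mul_mul_log_div_le hd ht.1]

theorem stmt2 (d ε : ℝ) (hd : 0 < d) (hε : (2 * Real.exp (-1/2) - 1) * d ≤ ε) :
    AntitoneOn (fun t : ℝ => max (Real.log (d / t)) 0 * (max (d - t) 0 + ε) ^ (-2 : ℤ))
      (Set.Ioi (0 : ℝ)) := by
  have hsmooth : EqOn (fun t => log (d / t) / (d - t + ε) ^ 2)
      (fun t => max (log (d / t)) 0 * (max (d - t) 0 + ε) ^ (-2 : ℤ)) (Ioc 0 d) := by
    intro t ⟨ht, htd⟩
    have hlog : 0 ≤ log (d / t) := log_nonneg ((one_le_div ht).2 htd)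
    dsimp only
    rw [max_eq_left hlog, max_eq_left (sub_nonneg.2 htd), zpow_neg, zpow_ofNat, div_eq_mul_inv]
  have hzero : EqOn (fun _ => 0)
      (fun t => max (log (d / t)) 0 * (max (d - t) 0 + ε) ^ (-2 : ℤ)) (Ici d) := by
    intro t (hdt : d ≤ t)
    have ht := hd.trans_le hdt
    have hlog : log (d / t) ≤ 0 := log_nonpos (div_pos hd ht).le ((div_le_one ht).2 hdt)
    simp [max_eq_right hlog]
  rw [← Ioc_union_Ici_eq_Ioi hd]
  exact ((antitoneOn_log_div_div_sq hd hε).congr hsmooth).union_right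
    (antitoneOn_const.congr hzero) (isGreatest_Ioc hd) isLeast_Ici
end

section
/- For every d > 0 and every ε ≥ (2e^{-1/2} − 1)d, the function q_{d,ε}(t) = ln⁺(d/t) · (d−t)₊ · ((d−t)₊ + ε)^{-3} is monotone decreasing on (0, ∞). -/
/-!
Write `u = d - t` and `L = log (d / t)`. For `t ≥ d` the function vanishes, and on `(0, d]` it
is `L u (u + ε)⁻³`, whose derivative has the sign of `3 L u - (u / t + L) (u + ε)`, i.e. of
`L (2u - ε) - (u / t) (u + ε)`. With `s = √(d / t)` one has `u / t = s² - 1` and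
`L s ≤ s² - 1` (this is `y ≤ sinh y` at `y = log s`), so it suffices that
`u (2 - s) ≤ ε (1 + s)`, i.e. `t (s - 1) (2 - s) ≤ ε`. Since `8 (s - 1) (2 - s) ≤ s²` and
`t s² = d`, this holds as soon as `ε ≥ d / 8`, which is weaker than `ε ≥ (2 e^{-1/2} - 1) d`.
-/

open Real Set

lemma one_div_eight_le_two_mul_exp_neg_half_sub_one : (1 : ℝ) / 8 ≤ 2 * exp (-1/2) - 1 := by
  have h : exp (-1/2) ^ 2 * exp 1 = 1 := by
    rw [sq, ← exp_add, ← exp_add]; norm_num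
  nlinarith [exp_one_lt_d9, exp_pos (-1/2)]

lemma Real.log_mul_sqrt_le_sub_one {x : ℝ} (hx : 1 ≤ x) : log x * √x ≤ x - 1 := by
  have hs : 0 < √x := sqrt_pos.2 (by linarith)
  have h := self_le_sinh_iff.2 (log_nonneg (one_le_sqrt.2 hx))
  rw [sinh_log hs, log_sqrt (by linarith)] at h
  calc log x * √x ≤ (√x - (√x)⁻¹) * √x := by gcongr; linarith
    _ = x - 1 := by field_simp; rw [sq_sqrt (by linarith)]

noncomputable def q (d ε t : ℝ) : ℝ :=
  max (log (d / t)) 0 * max (d - t) 0 * (max (d - t) 0 + ε) ^ (-3 : ℤ)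

noncomputable def qCore (d ε t : ℝ) : ℝ := log (d / t) * (d - t) * (d - t + ε) ^ (-3 : ℤ)

lemma hasDerivAt_qCore {d ε t : ℝ} (hd : 0 < d) (ht : 0 < t) (hε : 0 < d - t + ε) :
    HasDerivAt (qCore d ε)
      ((3 * log (d / t) * (d - t) - ((d - t) / t + log (d / t)) * (d - t + ε)) *
        (d - t + ε) ^ (-4 : ℤ)) t := by
  have hlog : HasDerivAt (fun t ↦ log (d / t)) (-t⁻¹) t := by
    have := (Real.hasDerivAt_log ht.ne').const_sub (log d)
    refine (this.congr_of_eventuallyEq ?_).congr_deriv (by ring)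
    filter_upwards [Ioi_mem_nhds ht] with y hy
    exact log_div hd.ne' (ne_of_gt hy)
  have hsub : HasDerivAt (fun t ↦ d - t) (-1) t := by simpa using (hasDerivAt_id t).const_sub d
  have hpow :
      HasDerivAt (fun t ↦ (d - t + ε) ^ (-3 : ℤ)) (-3 * (d - t + ε) ^ (-4 : ℤ) * -1) t := by
    simpa [Function.comp_def] using
      (hasDerivAt_zpow (-3) _ (Or.inl hε.ne')).comp t (hsub.add_const ε)
  refine ((hlog.mul hsub).mul hpow).congr_deriv ?_
  rw [show (-3 : ℤ) = -4 + 1 by norm_num, zpow_add_one₀ hε.ne']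
  simp only [Pi.mul_apply]
  field_simp
  ring

lemma three_mul_log_div_mul_sub_le {d ε t : ℝ} (ht : 0 < t) (htd : t ≤ d)
    (hε : d / 8 ≤ ε) :
    3 * log (d / t) * (d - t) ≤ ((d - t) / t + log (d / t)) * (d - t + ε) := by
  have hdt : 1 ≤ d / t := (one_le_div ht).2 htd
  set L := log (d / t)
  set s := √(d / t)
  have hs : 1 ≤ s := one_le_sqrt.2 hdt
  have hL0 : 0 ≤ L := log_nonneg hdt
  have hLs : L * s ≤ s ^ 2 - 1 := by
    rw [sq_sqrt (by positivity)]; exact log_mul_sqrt_le_sub_one hdt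
  have hd : d = t * s ^ 2 := by rw [sq_sqrt (by positivity)]; field_simp
  have hu : (d - t) / t = s ^ 2 - 1 := by rw [hd]; field_simp
  -- `8 (s - 1) (2 - s) ≤ s ^ 2` is `(3 s - 4) ^ 2 ≥ 0`
  have hε' : (d - t) * (2 - s) ≤ ε * (1 + s) := by
    rw [hd]
    nlinarith [mul_nonneg (mul_nonneg ht.le (sq_nonneg (3 * s - 4)))
      (by linarith : (0 : ℝ) ≤ s + 1)]
  rw [hu]
  rcases le_or_gt (2 * (d - t)) ε with h | h
  · nlinarith [mul_nonneg hL0 (sub_nonneg.2 h),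
      mul_nonneg (by nlinarith : 0 ≤ s ^ 2 - 1) (by linarith : 0 ≤ d - t + ε)]
  · have : s * (L * (2 * (d - t) - ε)) ≤ s * ((s ^ 2 - 1) * (d - t + ε)) := by
      calc s * (L * (2 * (d - t) - ε)) ≤ (s ^ 2 - 1) * (2 * (d - t) - ε) := by nlinarith
        _ ≤ s * ((s ^ 2 - 1) * (d - t + ε)) := by nlinarith
    nlinarith [le_of_mul_le_mul_left this (by linarith)]

lemma antitoneOn_qCore {d ε : ℝ} (hd : 0 < d) (hε : d / 8 ≤ ε) :
    AntitoneOn (qCore d ε) (Ioc 0 d) := by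
  have hderiv : ∀ t ∈ Ioc 0 d, HasDerivAt (qCore d ε)
      ((3 * log (d / t) * (d - t) - ((d - t) / t + log (d / t)) * (d - t + ε)) *
        (d - t + ε) ^ (-4 : ℤ)) t :=
    fun t ht ↦ hasDerivAt_qCore hd ht.1 (by linarith [ht.2])
  refine antitoneOn_of_hasDerivWithinAt_nonpos (convex_Ioc 0 d)
    (fun t ht ↦ (hderiv t ht).continuousAt.continuousWithinAt)
    (fun t ht ↦ (hderiv t (Ioo_subset_Ioc_self (by rwa [interior_Ioc] at ht))).hasDerivWithinAt)
    ?_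
  rw [interior_Ioc]
  intro t ht
  exact mul_nonpos_of_nonpos_of_nonneg
    (sub_nonpos.2 (three_mul_log_div_mul_sub_le ht.1 ht.2.le hε))
    (zpow_nonneg (by linarith [ht.2]) _)

theorem antitoneOn_q {d ε : ℝ} (hd : 0 < d) (hε : d / 8 ≤ ε) :
    AntitoneOn (q d ε) (Ioi 0) := by
  rw [← Ioc_union_Ici_eq_Ioi hd]
  refine AntitoneOn.union_right ((antitoneOn_qCore hd hε).congr fun t ht ↦ ?_)
    (fun x hx y hy _ ↦ ?_) ⟨right_mem_Ioc.2 hd, fun _ h ↦ h.2⟩ isLeast_Ici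
  · rw [q, qCore, max_eq_left (log_nonneg ((one_le_div ht.1).2 ht.2)),
      max_eq_left (sub_nonneg.2 ht.2)]
  · simp [q, max_eq_right (sub_nonpos.2 (mem_Ici.1 hx)),
      max_eq_right (sub_nonpos.2 (mem_Ici.1 hy))]

theorem stmt3 (d ε : ℝ) (hd : 0 < d) (hε : (2 * Real.exp (-1/2) - 1) * d ≤ ε) :
    AntitoneOn (fun t : ℝ =>
      max (Real.log (d / t)) 0 * max (d - t) 0 * (max (d - t) 0 + ε) ^ (-3 : ℤ))
      (Set.Ioi (0 : ℝ)) :=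
  antitoneOn_q hd (by nlinarith [one_div_eight_le_two_mul_exp_neg_half_sub_one])
end

section
/- For every d > 0 and ε ≥ (2e^{-1/2} − 1)d, and for every t ∈ (0, d), one has (d + ε − t)/t − 2 ln(d/t) ≥ 0. -/
theorem stmt5 (d ε t : ℝ) (hd : 0 < d) (hε : (2 * Real.exp (-1/2) - 1) * d ≤ ε)
    (ht : t ∈ Set.Ioo 0 d) :
    0 ≤ (d + ε - t) / t - 2 * Real.log (d / t) := by
  obtain ⟨ht0, htd⟩ := ht
  have hdt : 0 < d / t := div_pos hd ht0
  have hkey : Real.log (d / t) ≤ d / t * Real.exp (-1/2) - 1/2 := by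
    have h := Real.log_le_sub_one_of_pos (mul_pos hdt (Real.exp_pos (-1/2)))
    rw [Real.log_mul (ne_of_gt hdt) (ne_of_gt (Real.exp_pos _)), Real.log_exp] at h
    linarith
  have h2 : 2 * Real.log (d / t) ≤ 2 * Real.exp (-1/2) * (d / t) - 1 := by linarith
  have h3 : 2 * Real.exp (-1/2) * (d / t) - 1 ≤ (d + ε - t) / t := by
    rw [le_div_iff₀ ht0]
    have hc : (2 * Real.exp (-1/2) * (d / t) - 1) * t = 2 * Real.exp (-1/2) * d - t := by
      field_simp
    linarith [hc, hε]
  linarith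
end
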